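/- Let Q1, Q2, Q3, Q4 be four points in R^3 (not necessarily coplanar) forming a spatial quadrilateral with interior angles θ1 = ∠Q4Q1Q2, θ2 = ∠Q1Q2Q3, θ3 = ∠Q2Q3Q4, θ4 = ∠Q3Q4Q1. Then θ1 + θ2 + θ3 + θ4 ≤ 2π. -/

import Mathlib

open EuclideanGeometry Real
open scoped RealInnerProductSpace

private lemma angle_triangle_unit {V : Type*} [NormedAddCommGroup V] [InnerProductSpace ℝ V]
    (x y z : V) (hx : ‖x‖ = 1) (hy : ‖y‖ = 1) (hz : ‖z‖ = 1) :
    InnerProductGeometry.angle x z ≤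
      InnerProductGeometry.angle x y + InnerProductGeometry.angle y z := by
  by_cases hab : π ≤ InnerProductGeometry.angle x y + InnerProductGeometry.angle y z
  · exact le_trans (InnerProductGeometry.angle_le_pi x z) hab
  push_neg at hab
  by_contra hlt
  push_neg at hlt
  have hmono := Real.strictAntiOn_cos
    (Set.mem_Icc.2 ⟨add_nonneg (InnerProductGeometry.angle_nonneg x y) (InnerProductGeometry.angle_nonneg y z), hab.le⟩)
    (Set.mem_Icc.2 ⟨InnerProductGeometry.angle_nonneg x z, InnerProductGeometry.angle_le_pi x z⟩) hlt
  -- hmono : cos (InnerProductGeometry.angle x z) < cos (InnerProductGeometry.angle x y + InnerProductGeometry.angle y z)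
  have hcos : Real.cos (InnerProductGeometry.angle x y + InnerProductGeometry.angle y z) ≤ Real.cos (InnerProductGeometry.angle x z) := by
    have hxy : Real.cos (InnerProductGeometry.angle x y) = ⟪x, y⟫ := by rw [InnerProductGeometry.cos_angle, hx, hy]; simp
    have hyz : Real.cos (InnerProductGeometry.angle y z) = ⟪y, z⟫ := by rw [InnerProductGeometry.cos_angle, hy, hz]; simp
    have hxz : Real.cos (InnerProductGeometry.angle x z) = ⟪x, z⟫ := by rw [InnerProductGeometry.cos_angle, hx, hz]; simp
    have hix : ⟪x, x⟫ = 1 := by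
      rw [real_inner_self_eq_norm_mul_norm, hx]; norm_num
    have hiy : ⟪y, y⟫ = 1 := by
      rw [real_inner_self_eq_norm_mul_norm, hy]; norm_num
    have hiz : ⟪z, z⟫ = 1 := by
      rw [real_inner_self_eq_norm_mul_norm, hz]; norm_num
    have hsxy : Real.sin (InnerProductGeometry.angle x y) = Real.sqrt (1 - ⟪x, y⟫ * ⟪x, y⟫) := by
      have := InnerProductGeometry.sin_angle_mul_norm_mul_norm x y
      rwa [hx, hy, hix, hiy, mul_one, mul_one] at this
    have hsyz : Real.sin (InnerProductGeometry.angle y z) = Real.sqrt (1 - ⟪y, z⟫ * ⟪y, z⟫) := by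
      have := InnerProductGeometry.sin_angle_mul_norm_mul_norm y z
      rwa [hy, hz, hiy, hiz, mul_one, mul_one] at this
    rw [Real.cos_add, hxy, hyz, hxz, hsxy, hsyz]
    -- key inequality via Cauchy–Schwarz on the components orthogonal to y
    set u := x - ⟪x, y⟫ • y with hu
    set w := z - ⟪z, y⟫ • y with hw
    have huw : ⟪u, w⟫ = ⟪x, z⟫ - ⟪x, y⟫ * ⟪y, z⟫ := by
      simp only [hu, hw, inner_sub_left, inner_sub_right, real_inner_smul_left,
        real_inner_smul_right, hiy]
      rw [real_inner_comm z y, real_inner_comm z x]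
      ring_nf
    have hcs : -(‖u‖ * ‖w‖) ≤ ⟪u, w⟫ :=
      neg_le_of_neg_le (by linarith [abs_le.1 (abs_real_inner_le_norm u w)])
    have hnu : ‖u‖ = Real.sqrt (1 - ⟪x, y⟫ * ⟪x, y⟫) := by
      have h2 : ‖u‖ * ‖u‖ = 1 - ⟪x, y⟫ * ⟪x, y⟫ := by
        rw [← real_inner_self_eq_norm_mul_norm]
        simp only [hu, inner_sub_left, inner_sub_right, real_inner_smul_left,
          real_inner_smul_right, hix, hiy]
        rw [real_inner_comm y x]; ring
      rw [← h2, Real.sqrt_mul_self (norm_nonneg u)]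
    have hnw : ‖w‖ = Real.sqrt (1 - ⟪y, z⟫ * ⟪y, z⟫) := by
      have h2 : ‖w‖ * ‖w‖ = 1 - ⟪y, z⟫ * ⟪y, z⟫ := by
        rw [← real_inner_self_eq_norm_mul_norm]
        simp only [hw, inner_sub_left, inner_sub_right, real_inner_smul_left,
          real_inner_smul_right, hiz, hiy]
        rw [real_inner_comm y z, real_inner_comm z y]; ring
      rw [← h2, Real.sqrt_mul_self (norm_nonneg w)]
    rw [← hnu, ← hnw]
    linarith [huw ▸ hcs]
  linarith

private lemma angle_triangle' {V : Type*} [NormedAddCommGroup V] [InnerProductSpace ℝ V]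
    (x y z : V) :
    InnerProductGeometry.angle x z ≤
      InnerProductGeometry.angle x y + InnerProductGeometry.angle y z := by
  by_cases hx : x = 0
  · subst hx
    simpa using InnerProductGeometry.angle_nonneg y z
  by_cases hz : z = 0
  · subst hz
    simpa [add_comm] using InnerProductGeometry.angle_nonneg x y
  by_cases hy : y = 0
  · subst hy
    simp only [InnerProductGeometry.angle_zero_left, InnerProductGeometry.angle_zero_right]
    linarith [InnerProductGeometry.angle_le_pi x z]
  have hxn : (0:ℝ) < ‖x‖ := norm_pos_iff.2 hx
  have hyn : (0:ℝ) < ‖y‖ := norm_pos_iff.2 hy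
  have hzn : (0:ℝ) < ‖z‖ := norm_pos_iff.2 hz
  have key := angle_triangle_unit (‖x‖⁻¹ • x) (‖y‖⁻¹ • y) (‖z‖⁻¹ • z)
    (by rw [norm_smul]; simp [abs_of_pos (inv_pos.2 hxn)]; field_simp)
    (by rw [norm_smul]; simp [abs_of_pos (inv_pos.2 hyn)]; field_simp)
    (by rw [norm_smul]; simp [abs_of_pos (inv_pos.2 hzn)]; field_simp)
  simpa [InnerProductGeometry.angle_smul_left_of_pos, InnerProductGeometry.angle_smul_right_of_pos, inv_pos.2 hxn, inv_pos.2 hyn,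
    inv_pos.2 hzn] using key

/-- Triangle inequality for angles at a point. -/
private lemma angle_le_add {V : Type*} {P : Type*} [NormedAddCommGroup V]
    [InnerProductSpace ℝ V] [MetricSpace P] [NormedAddTorsor V P] (a b c d : P) :
    ∠ a b c ≤ ∠ a b d + ∠ d b c :=
  angle_triangle' (a -ᵥ b) (d -ᵥ b) (c -ᵥ b)

/-- Four points in ℝ³ (not necessarily coplanar) forming a spatial quadrilateral:
the sum of the four interior angles is at most 2π. -/
theorem quad_angle_sum_le_two_pi
    (Q1 Q2 Q3 Q4 : EuclideanSpace ℝ (Fin 3))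
    (h1 : ¬ Collinear ℝ ({Q4, Q1, Q2} : Set (EuclideanSpace ℝ (Fin 3))))
    (h2 : ¬ Collinear ℝ ({Q1, Q2, Q3} : Set (EuclideanSpace ℝ (Fin 3))))
    (h3 : ¬ Collinear ℝ ({Q2, Q3, Q4} : Set (EuclideanSpace ℝ (Fin 3))))
    (h4 : ¬ Collinear ℝ ({Q3, Q4, Q1} : Set (EuclideanSpace ℝ (Fin 3)))) :
    ∠ Q4 Q1 Q2 + ∠ Q1 Q2 Q3 + ∠ Q2 Q3 Q4 + ∠ Q3 Q4 Q1 ≤ 2 * π := by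
  have h21 : Q2 ≠ Q1 := by
    rintro rfl; exact h2 (by simpa [Set.insert_comm] using collinear_pair ℝ Q2 Q3)
  have h31 : Q3 ≠ Q1 := by
    rintro rfl; exact h2 (by
      simpa [Set.insert_comm, Set.pair_comm] using collinear_pair ℝ Q3 Q2)
  have h34 : Q3 ≠ Q4 := by
    rintro rfl; exact h4 (by simpa [Set.insert_comm] using collinear_pair ℝ Q3 Q1)
  have h14 : Q1 ≠ Q4 := by
    rintro rfl; exact h4 (by
      simpa [Set.insert_comm, Set.pair_comm] using collinear_pair ℝ Q1 Q3)
  have t1 : ∠ Q4 Q1 Q2 ≤ ∠ Q4 Q1 Q3 + ∠ Q3 Q1 Q2 := angle_le_add Q4 Q1 Q2 Q3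
  have t2 : ∠ Q2 Q3 Q4 ≤ ∠ Q2 Q3 Q1 + ∠ Q1 Q3 Q4 := angle_le_add Q2 Q3 Q4 Q1
  have s1 : ∠ Q1 Q2 Q3 + ∠ Q2 Q3 Q1 + ∠ Q3 Q1 Q2 = π :=
    EuclideanGeometry.angle_add_angle_add_angle_eq_pi Q3 h21
  have s2 : ∠ Q3 Q4 Q1 + ∠ Q4 Q1 Q3 + ∠ Q1 Q3 Q4 = π :=
    EuclideanGeometry.angle_add_angle_add_angle_eq_pi Q1 h34.symm
  linarith
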